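/- If φ : [a,b] → ℝ is ACG* on [a,b], then φ is differentiable almost everywhere on [a,b] (with respect to Lebesgue measure). -/

import Mathlib

/-!
AC* on a piece `E` bounds the oscillation sums over non-overlapping intervals with endpoints in `E`
(VB*), and by continuity the bound passes to the closed set `K = closure E`. Then `φ` has bounded
variation on `K`, hence is differentiable within `K` at almost every point of `K`. The gaps of `K`
carry summable weights `osc + length`; the atomic measure they define is singular, so at almost
every `t` the gaps near `t` have weight `o(|endpoint - t|)`. For `x` in such a gap, comparing `φ x`
with `φ` at the endpoint lying between `t` and `x` turns the derivative within `K` into a genuine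
derivative.
-/

open Filter Set Topology MeasureTheory

/-- Lower right Dini derivative of a real-valued function. -/
noncomputable def DlowR (φ : ℝ → ℝ) (t : ℝ) : EReal :=
  Filter.liminf (fun s : ℝ => (((φ (t + s) - φ t) / s : ℝ) : EReal))
    (nhdsWithin 0 (Set.Ioi 0))

/-- Oscillation of `φ` on the interval `[c,d]`. -/
noncomputable def osc (φ : ℝ → ℝ) (c d : ℝ) : ℝ :=
  sSup {r | ∃ x y : ℝ, c ≤ x ∧ x ≤ y ∧ y ≤ d ∧ r = |φ y - φ x|}

/-- A finite family of intervals `[c i, d i]` is non-overlapping with endpoints in `S`. -/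
def GoodIntervals (S : Set ℝ) {n : ℕ} (c d : Fin n → ℝ) : Prop :=
  (∀ i, c i ∈ S ∧ d i ∈ S ∧ c i ≤ d i) ∧
    Pairwise fun i j => d i ≤ c j ∨ d j ≤ c i

/-- `φ` is absolutely continuous (AC) on `S`. -/
def FnAC (φ : ℝ → ℝ) (S : Set ℝ) : Prop :=
  ∀ ε > 0, ∃ δ > 0, ∀ (n : ℕ) (c d : Fin n → ℝ),
    GoodIntervals S c d → (∑ i, (d i - c i)) < δ →
      (∑ i, |φ (d i) - φ (c i)|) < ε

/-- `φ` is absolutely continuous in the restricted sense (AC*) on `S`. -/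
def FnACstar (φ : ℝ → ℝ) (S : Set ℝ) : Prop :=
  ∀ ε > 0, ∃ δ > 0, ∀ (n : ℕ) (c d : Fin n → ℝ),
    GoodIntervals S c d → (∑ i, (d i - c i)) < δ →
      (∑ i, osc φ (c i) (d i)) < ε

/-- `φ` is generalized absolutely continuous (ACG) on `[a,b]`. -/
def FnACG (φ : ℝ → ℝ) (a b : ℝ) : Prop :=
  ContinuousOn φ (Set.Icc a b) ∧
    ∃ S : ℕ → Set ℝ, (⋃ n, S n) = Set.Icc a b ∧ ∀ n, FnAC φ (S n)

/-- `φ` is generalized absolutely continuous in the restricted sense (ACG*) on `[a,b]`. -/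
def FnACGstar (φ : ℝ → ℝ) (a b : ℝ) : Prop :=
  ContinuousOn φ (Set.Icc a b) ∧
    ∃ S : ℕ → Set ℝ, (⋃ n, S n) = Set.Icc a b ∧ ∀ n, FnACstar φ (S n)

/-- `f` has Henstock–Kurzweil integral `I` on `[a,b]`. -/
def HasHKIntegral (f : ℝ → ℝ) (a b I : ℝ) : Prop :=
  ∀ ε > 0, ∃ δ : ℝ → ℝ, (∀ t ∈ Set.Icc a b, 0 < δ t) ∧
    ∀ (n : ℕ) (x : Fin (n + 1) → ℝ) (t : Fin n → ℝ),
      Monotone x → x 0 = a → x (Fin.last n) = b →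
      (∀ i : Fin n, t i ∈ Set.Icc (x i.castSucc) (x i.succ)) →
      (∀ i : Fin n, x i.succ - x i.castSucc < δ (t i)) →
      |(∑ i : Fin n, f (t i) * (x i.succ - x i.castSucc)) - I| < ε

section Oscillation

variable {φ : ℝ → ℝ} {c d : ℝ}

lemma bddAbove_osc_set (hφ : ContinuousOn φ (Icc c d)) :
    BddAbove {r | ∃ x y : ℝ, c ≤ x ∧ x ≤ y ∧ y ≤ d ∧ r = |φ y - φ x|} := by
  obtain ⟨C, hC⟩ := isCompact_Icc.exists_bound_of_continuousOn hφ
  refine ⟨C + C, ?_⟩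
  rintro r ⟨x, y, hcx, hxy, hyd, rfl⟩
  exact (abs_sub _ _).trans
    (add_le_add (hC y ⟨hcx.trans hxy, hyd⟩) (hC x ⟨hcx, hxy.trans hyd⟩))

lemma abs_sub_le_osc (hφ : ContinuousOn φ (Icc c d)) {x y : ℝ} (hcx : c ≤ x) (hxy : x ≤ y)
    (hyd : y ≤ d) : |φ y - φ x| ≤ osc φ c d :=
  le_csSup (bddAbove_osc_set hφ) ⟨x, y, hcx, hxy, hyd, rfl⟩

lemma osc_nonneg (hφ : ContinuousOn φ (Icc c d)) (hcd : c ≤ d) : 0 ≤ osc φ c d :=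
  (abs_nonneg _).trans (abs_sub_le_osc hφ le_rfl hcd le_rfl)

lemma osc_le {B : ℝ} (hcd : c ≤ d)
    (hB : ∀ x y, c ≤ x → x ≤ y → y ≤ d → |φ y - φ x| ≤ B) : osc φ c d ≤ B :=
  csSup_le ⟨_, c, c, le_rfl, le_rfl, hcd, rfl⟩ fun _ ⟨x, y, hcx, hxy, hyd, hr⟩ =>
    hr ▸ hB x y hcx hxy hyd

lemma osc_mono {c' d' : ℝ} (hφ : ContinuousOn φ (Icc c' d')) (hc : c' ≤ c) (hcd : c ≤ d)
    (hd : d ≤ d') : osc φ c d ≤ osc φ c' d' :=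
  osc_le hcd fun _ _ hcx hxy hyd => abs_sub_le_osc hφ (hc.trans hcx) hxy (hyd.trans hd)

lemma osc_le_osc_add {a b ε η : ℝ} (hφ : ContinuousOn φ (Icc a b))
    (hη : ∀ x ∈ Icc a b, ∀ y ∈ Icc a b, dist x y < η → dist (φ x) (φ y) < ε)
    {c' d' : ℝ} (hac : a ≤ c) (hcd : c ≤ d) (hdb : d ≤ b) (hac' : a ≤ c') (hcd' : c' ≤ d')
    (hdb' : d' ≤ b) (hcc' : |c - c'| < η) (hdd' : |d - d'| < η) :
    osc φ c d ≤ osc φ c' d' + 2 * ε := by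
  refine osc_le hcd fun x y hcx hxy hyd => ?_
  let clamp : ℝ → ℝ := fun z => max c' (min z d')
  have hclamp_mem : ∀ z, c' ≤ clamp z ∧ clamp z ≤ d' := fun z =>
    ⟨le_max_left _ _, max_le hcd' (min_le_right _ _)⟩
  have hclamp_near : ∀ z, c ≤ z → z ≤ d → |z - clamp z| < η := by
    intro z hcz hzd
    have hη0 : 0 < η := (abs_nonneg _).trans_lt hcc'
    rw [abs_lt] at hcc' hdd' ⊢
    simp only [clamp, max_def, min_def]
    split_ifs <;> constructor <;> linarith
  have hnear : ∀ z, c ≤ z → z ≤ d → |φ z - φ (clamp z)| < ε := fun z hcz hzd =>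
    hη z ⟨hac.trans hcz, hzd.trans hdb⟩ (clamp z)
      ⟨hac'.trans (hclamp_mem z).1, (hclamp_mem z).2.trans hdb'⟩ (hclamp_near z hcz hzd)
  have hmid : |φ (clamp y) - φ (clamp x)| ≤ osc φ c' d' :=
    abs_sub_le_osc (hφ.mono (Icc_subset_Icc hac' hdb')) (hclamp_mem x).1
      (max_le_max le_rfl (min_le_min_right d' hxy)) (hclamp_mem y).2
  have hx := hnear x hcx (hxy.trans hyd)
  have hy := hnear y (hcx.trans hxy) hyd
  calc |φ y - φ x|
      = |(φ y - φ (clamp y)) + (φ (clamp y) - φ (clamp x)) + (φ (clamp x) - φ x)| := by ring_nf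
    _ ≤ |φ y - φ (clamp y)| + |φ (clamp y) - φ (clamp x)| + |φ (clamp x) - φ x| :=
        abs_add_three _ _ _
    _ ≤ osc φ c' d' + 2 * ε := by rw [abs_sub_comm (φ (clamp x))] at *; linarith

end Oscillation

section GoodIntervals

variable {S : Set ℝ} {n : ℕ} {c d : Fin n → ℝ}

lemma GoodIntervals.mono {T : Set ℝ} (h : GoodIntervals S c d) (hST : S ⊆ T) :
    GoodIntervals T c d :=
  ⟨fun i => ⟨hST (h.1 i).1, hST (h.1 i).2.1, (h.1 i).2.2⟩, h.2⟩

lemma GoodIntervals.sum_sub_le (h : GoodIntervals S c d) {u v : ℝ} (huv : u ≤ v)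
    (hS : S ⊆ Icc u v) : ∑ i, (d i - c i) ≤ v - u := by
  have hdisj : ((Finset.univ : Finset (Fin n)) : Set (Fin n)).PairwiseDisjoint
      fun i => Ioc (c i) (d i) := by
    intro i _ j _ hij
    rw [Function.onFun, Set.Ioc_disjoint_Ioc]
    rcases h.2 hij with h | h
    · exact (min_le_left _ _).trans (h.trans (le_max_right _ _))
    · exact (min_le_right _ _).trans (h.trans (le_max_left _ _))
  have hunion : ⋃ i ∈ (Finset.univ : Finset (Fin n)), Ioc (c i) (d i) ⊆ Ioc u v := by
    simp only [Finset.mem_univ, iUnion_true, iUnion_subset_iff]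
    exact fun i => Ioc_subset_Ioc (hS (h.1 i).1).1 (hS (h.1 i).2.1).2
  have hvol := measure_mono (μ := volume) hunion
  rw [measure_biUnion_finset hdisj fun i _ => measurableSet_Ioc] at hvol
  simp only [Real.volume_Ioc] at hvol
  rwa [← ENNReal.ofReal_sum_of_nonneg fun i _ => sub_nonneg.2 (h.1 i).2.2,
    ENNReal.ofReal_le_ofReal_iff (sub_nonneg.2 huv)] at hvol

lemma exists_goodIntervals_of_finset {ι : Type*} (s : Finset ι) (c d : ι → ℝ)
    (hmem : ∀ i ∈ s, c i ∈ S ∧ d i ∈ S ∧ c i ≤ d i)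
    (hdisj : (s : Set ι).Pairwise fun i j => d i ≤ c j ∨ d j ≤ c i) :
    ∃ (m : ℕ) (c' d' : Fin m → ℝ), GoodIntervals S c' d' ∧
      ∀ f : ℝ → ℝ → ℝ, ∑ j, f (c' j) (d' j) = ∑ i ∈ s, f (c i) (d i) := by
  let e : Fin s.card ≃ s := s.equivFin.symm
  refine ⟨s.card, fun j => c (e j), fun j => d (e j),
    ⟨fun j => hmem _ (e j).2, fun i j hij => hdisj (e i).2 (e j).2 ?_⟩, fun f => ?_⟩
  · exact fun h => hij (e.injective (Subtype.ext h))
  · rw [← Finset.sum_coe_sort s]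
    exact e.sum_comp fun i => f (c i) (d i)

end GoodIntervals

/-- Bounded variation in the restricted sense (VB*) on `S`, with bound `M`. -/
def FnVBstar (φ : ℝ → ℝ) (S : Set ℝ) (M : ℝ) : Prop :=
  ∀ (n : ℕ) (c d : Fin n → ℝ), GoodIntervals S c d → (∑ i, osc φ (c i) (d i)) ≤ M

section RestrictedVariation

variable {φ : ℝ → ℝ} {a b M : ℝ} {S E : Set ℝ}

lemma FnVBstar.sum_le_of_finset (h : FnVBstar φ S M) {ι : Type*} (s : Finset ι) (c d : ι → ℝ)
    (hmem : ∀ i ∈ s, c i ∈ S ∧ d i ∈ S ∧ c i ≤ d i)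
    (hdisj : (s : Set ι).Pairwise fun i j => d i ≤ c j ∨ d j ≤ c i) :
    ∑ i ∈ s, osc φ (c i) (d i) ≤ M := by
  obtain ⟨m, c', d', hgood, hsum⟩ := exists_goodIntervals_of_finset s c d hmem hdisj
  rw [← hsum fun x y => osc φ x y]
  exact h m c' d' hgood

/-- Sorting the intervals into buckets of width `δ / 3` by their left endpoints, each bucket lies
in an interval of length `2δ/3 < δ`. -/
lemma sum_osc_le_of_short {δ : ℝ} (hδ : 0 < δ)
    (hAC : ∀ (m : ℕ) (c d : Fin m → ℝ), GoodIntervals E c d → ∑ i, (d i - c i) < δ →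
      ∑ i, osc φ (c i) (d i) < 1)
    {n : ℕ} {c d : Fin n → ℝ} (hg : GoodIntervals E c d) (hE : E ⊆ Icc a b)
    (s : Finset (Fin n)) (hshort : ∀ i ∈ s, d i - c i < δ / 3) :
    ∑ i ∈ s, osc φ (c i) (d i) ≤ ⌊(b - a) / (δ / 3)⌋₊ + 1 := by
  have hmem : ∀ i, c i ∈ Icc a b := fun i => hE (hg.1 i).1
  let bucket : Fin n → ℕ := fun i => ⌊(c i - a) / (δ / 3)⌋₊
  have hmaps : ∀ i ∈ s, bucket i ∈ Finset.range (⌊(b - a) / (δ / 3)⌋₊ + 1) := by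
    intro i _
    rw [Finset.mem_range, Nat.lt_succ_iff]
    exact Nat.floor_le_floor
      (div_le_div_of_nonneg_right (by linarith [(hmem i).2]) (by positivity))
  have hbucket : ∀ k : ℕ, ∑ i ∈ s with bucket i = k, osc φ (c i) (d i) ≤ 1 := by
    intro k
    set u : ℝ := a + k * (δ / 3) with hu
    have hsub : ∀ i ∈ s.filter (bucket · = k),
        c i ∈ E ∩ Icc u (u + 2 * (δ / 3)) ∧ d i ∈ E ∩ Icc u (u + 2 * (δ / 3)) ∧ c i ≤ d i := by
      intro i hi
      obtain ⟨his, hk⟩ := Finset.mem_filter.1 hi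
      have hnn : 0 ≤ (c i - a) / (δ / 3) := div_nonneg (by linarith [(hmem i).1]) (by positivity)
      have h1 : (k : ℝ) * (δ / 3) ≤ c i - a :=
        hk ▸ (le_div_iff₀ (by positivity)).1 (Nat.floor_le hnn)
      have h2 : c i - a < (k + 1) * (δ / 3) :=
        hk ▸ (div_lt_iff₀ (by positivity)).1 (Nat.lt_floor_add_one _)
      have h3 := hshort i his
      have h4 := (hg.1 i).2.2
      exact ⟨⟨(hg.1 i).1, by linarith, by linarith⟩, ⟨(hg.1 i).2.1, by linarith, by linarith⟩, h4⟩
    obtain ⟨m, c', d', hgood, hsum⟩ := exists_goodIntervals_of_finset (s.filter (bucket · = k))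
      c d hsub fun i _ j _ hij => hg.2 hij
    have hlen := hgood.sum_sub_le (by linarith) inter_subset_right
    rw [← hsum fun x y => osc φ x y]
    exact (hAC m c' d' (hgood.mono inter_subset_left) (by linarith)).le
  calc ∑ i ∈ s, osc φ (c i) (d i)
      = ∑ k ∈ Finset.range (⌊(b - a) / (δ / 3)⌋₊ + 1), ∑ i ∈ s with bucket i = k,
          osc φ (c i) (d i) := (Finset.sum_fiberwise_of_maps_to hmaps _).symm
    _ ≤ ∑ k ∈ Finset.range (⌊(b - a) / (δ / 3)⌋₊ + 1), (1 : ℝ) :=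
        Finset.sum_le_sum fun k _ => hbucket k
    _ = ⌊(b - a) / (δ / 3)⌋₊ + 1 := by simp

lemma FnACstar.exists_fnVBstar (hab : a ≤ b) (hφ : ContinuousOn φ (Icc a b)) (hE : E ⊆ Icc a b)
    (h : FnACstar φ E) : ∃ M, FnVBstar φ E M := by
  obtain ⟨δ, hδ, hAC⟩ := h 1 one_pos
  refine ⟨(b - a) / (δ / 3) * osc φ a b + (⌊(b - a) / (δ / 3)⌋₊ + 1), fun n c d hg => ?_⟩
  let long : Finset (Fin n) := {i | δ / 3 ≤ d i - c i}
  have hosc : ∀ i, osc φ (c i) (d i) ≤ osc φ a b := fun i =>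
    osc_mono hφ (hE (hg.1 i).1).1 (hg.1 i).2.2 (hE (hg.1 i).2.1).2
  have hcard : (long.card : ℝ) ≤ (b - a) / (δ / 3) := by
    rw [le_div_iff₀ (by positivity), ← nsmul_eq_mul]
    calc long.card • (δ / 3) ≤ ∑ i ∈ long, (d i - c i) :=
          Finset.card_nsmul_le_sum _ _ _ fun i hi => (Finset.mem_filter.1 hi).2
      _ ≤ ∑ i, (d i - c i) := Finset.sum_le_sum_of_subset_of_nonneg (Finset.subset_univ _)
          fun i _ _ => sub_nonneg.2 (hg.1 i).2.2
      _ ≤ b - a := hg.sum_sub_le hab hE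
  have hlong : ∑ i ∈ long, osc φ (c i) (d i) ≤ (b - a) / (δ / 3) * osc φ a b :=
    calc ∑ i ∈ long, osc φ (c i) (d i) ≤ long.card • osc φ a b :=
          Finset.sum_le_card_nsmul _ _ _ fun i _ => hosc i
      _ ≤ (b - a) / (δ / 3) * osc φ a b := by
          rw [nsmul_eq_mul]; exact mul_le_mul_of_nonneg_right hcard (osc_nonneg hφ hab)
  have hshort := sum_osc_le_of_short hδ hAC hg hE
    (Finset.univ.filter fun i => ¬δ / 3 ≤ d i - c i) fun i hi => not_le.1 (Finset.mem_filter.1 hi).2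
  rw [← Finset.sum_filter_add_sum_filter_not Finset.univ (fun i => δ / 3 ≤ d i - c i)]
  exact add_le_add hlong hshort

lemma exists_strictMonoOn_near_of_subset_closure (V : Finset ℝ)
    (hV : (V : Set ℝ) ⊆ closure E) {η : ℝ} (hη : 0 < η) :
    ∃ ρ : ℝ → ℝ, (∀ v ∈ V, ρ v ∈ E ∧ |ρ v - v| < η) ∧ StrictMonoOn ρ V := by
  have hsep : ∀ᶠ r in 𝓝[>] (0 : ℝ), ∀ p ∈ V ×ˢ V, p.1 < p.2 → 2 * r < p.2 - p.1 := by
    rw [Finset.eventually_all]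
    intro p _
    by_cases hp : p.1 < p.2
    · have : Tendsto (fun r : ℝ => 2 * r) (𝓝[>] 0) (𝓝 0) :=
        tendsto_nhdsWithin_of_tendsto_nhds (by simpa using (continuous_const_mul (2 : ℝ)).tendsto 0)
      filter_upwards [this.eventually (gt_mem_nhds (sub_pos.2 hp))] with r hr _ using hr
    · exact Eventually.of_forall fun r h => absurd h hp
  obtain ⟨r, hr, hr0, hrη⟩ := (hsep.and (Ioc_mem_nhdsGT hη)).exists
  have hnear : ∀ v ∈ V, ∃ e ∈ E, |e - v| < r := fun v hv => by
    obtain ⟨e, he, hev⟩ := Metric.mem_closure_iff.1 (hV hv) r hr0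
    exact ⟨e, he, by rwa [← Real.dist_eq, dist_comm]⟩
  choose! ρ hρE hρv using hnear
  refine ⟨ρ, fun v hv => ⟨hρE v hv, (hρv v hv).trans_le hrη⟩, fun v hv w hw hvw => ?_⟩
  have := hr (v, w) (Finset.mem_product.2 ⟨hv, hw⟩) hvw
  have h1 := hρv v hv
  have h2 := hρv w hw
  rw [abs_lt] at h1 h2
  dsimp only at this
  linarith

lemma FnVBstar.to_closure (hφ : ContinuousOn φ (Icc a b)) (hE : E ⊆ Icc a b)
    (h : FnVBstar φ E M) : FnVBstar φ (closure E) M := by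
  intro n c d hg
  have hcl : closure E ⊆ Icc a b := closure_minimal hE isClosed_Icc
  refine le_of_forall_pos_le_add fun ε hε => ?_
  obtain ⟨η, hη, hunif⟩ := Metric.uniformContinuousOn_iff.1
    (isCompact_Icc.uniformContinuousOn_of_continuous hφ) (ε / (2 * (n + 1))) (by positivity)
  let V : Finset ℝ := Finset.univ.image c ∪ Finset.univ.image d
  have hcV : ∀ i, c i ∈ V := fun i =>
    Finset.mem_union_left _ (Finset.mem_image_of_mem c (Finset.mem_univ i))
  have hdV : ∀ i, d i ∈ V := fun i =>
    Finset.mem_union_right _ (Finset.mem_image_of_mem d (Finset.mem_univ i))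
  have hVcl : (V : Set ℝ) ⊆ closure E := by
    intro v hv
    simp only [V, Finset.coe_union, Finset.coe_image, Finset.coe_univ, image_univ, mem_union,
      mem_range] at hv
    rcases hv with ⟨i, rfl⟩ | ⟨i, rfl⟩
    exacts [(hg.1 i).1, (hg.1 i).2.1]
  obtain ⟨ρ, hρ, hmono⟩ := exists_strictMonoOn_near_of_subset_closure V hVcl hη
  have hg' : GoodIntervals E (ρ ∘ c) (ρ ∘ d) :=
    ⟨fun i => ⟨(hρ _ (hcV i)).1, (hρ _ (hdV i)).1, hmono.monotoneOn (hcV i) (hdV i) (hg.1 i).2.2⟩,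
      fun i j hij => (hg.2 hij).imp (hmono.monotoneOn (hdV i) (hcV j))
        (hmono.monotoneOn (hdV j) (hcV i))⟩
  have hosc : ∀ i, osc φ (c i) (d i) ≤ osc φ (ρ (c i)) (ρ (d i)) + 2 * (ε / (2 * (n + 1))) :=
    fun i => osc_le_osc_add hφ hunif (hcl (hg.1 i).1).1 (hg.1 i).2.2 (hcl (hg.1 i).2.1).2
      (hE (hg'.1 i).1).1 (hg'.1 i).2.2 (hE (hg'.1 i).2.1).2
      (by rw [abs_sub_comm]; exact (hρ _ (hcV i)).2) (by rw [abs_sub_comm]; exact (hρ _ (hdV i)).2)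
  calc ∑ i, osc φ (c i) (d i)
      ≤ ∑ i, (osc φ (ρ (c i)) (ρ (d i)) + 2 * (ε / (2 * (n + 1)))) :=
        Finset.sum_le_sum fun i _ => hosc i
    _ = ∑ i, osc φ (ρ (c i)) (ρ (d i)) + n / (n + 1) * ε := by
        rw [Finset.sum_add_distrib, Finset.sum_const, Finset.card_univ, Fintype.card_fin,
          nsmul_eq_mul]
        field_simp
    _ ≤ M + ε := by
        gcongr
        · exact h n _ _ hg'
        · exact mul_le_of_le_one_left hε.le ((div_le_one (by positivity)).2 (by linarith))

lemma FnVBstar.boundedVariationOn (hφ : ContinuousOn φ (Icc a b)) (hS : S ⊆ Icc a b)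
    (h : FnVBstar φ S M) : BoundedVariationOn φ S := by
  refine ne_top_of_le_ne_top (ENNReal.ofReal_ne_top (r := M)) (iSup_le fun ⟨m, u, hu, hus⟩ => ?_)
  have hsum : ∑ i ∈ Finset.range m, |φ (u (i + 1)) - φ (u i)| ≤ M :=
    calc ∑ i ∈ Finset.range m, |φ (u (i + 1)) - φ (u i)|
        ≤ ∑ i ∈ Finset.range m, osc φ (u i) (u (i + 1)) := Finset.sum_le_sum fun i _ =>
          abs_sub_le_osc (hφ.mono (Icc_subset_Icc (hS (hus i)).1 (hS (hus (i + 1))).2)) le_rfl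
            (hu i.le_succ) le_rfl
      _ ≤ M := h.sum_le_of_finset _ u (fun i => u (i + 1))
          (fun i _ => ⟨hus i, hus (i + 1), hu i.le_succ⟩) fun i _ j _ hij =>
            (lt_or_gt_of_ne hij).imp (fun h => hu h) (fun h => hu h)
  calc ∑ i ∈ Finset.range m, edist (φ (u (i + 1))) (φ (u i))
      = ENNReal.ofReal (∑ i ∈ Finset.range m, |φ (u (i + 1)) - φ (u i)|) := by
        rw [ENNReal.ofReal_sum_of_nonneg fun i _ => abs_nonneg _]
        simp only [edist_dist, Real.dist_eq]
    _ ≤ ENNReal.ofReal M := ENNReal.ofReal_le_ofReal hsum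

end RestrictedVariation

def gapsOf (K : Set ℝ) : Set (ℝ × ℝ) :=
  {p | p.1 ∈ K ∧ p.2 ∈ K ∧ p.1 < p.2 ∧ Disjoint (Ioo p.1 p.2) K}

section Gaps

variable {K : Set ℝ}

lemma notMem_Ioo_of_mem_gapsOf {p : ℝ × ℝ} (hp : p ∈ gapsOf K) {y : ℝ} (hy : y ∈ K) :
    y ∉ Ioo p.1 p.2 :=
  fun hyp => disjoint_left.1 hp.2.2.2 hyp hy

lemma gapsOf_pairwise : (gapsOf K).Pairwise fun p q => p.2 ≤ q.1 ∨ q.2 ≤ p.1 := by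
  intro p hp q hq hpq
  by_contra! h
  have h1 : p.1 = q.1 := le_antisymm
    (not_lt.1 fun h' => notMem_Ioo_of_mem_gapsOf hq hp.1 ⟨h', h.2⟩)
    (not_lt.1 fun h' => notMem_Ioo_of_mem_gapsOf hp hq.1 ⟨h', h.1⟩)
  have h2 : p.2 = q.2 := le_antisymm
    (not_lt.1 fun h' => notMem_Ioo_of_mem_gapsOf hp hq.2.1 ⟨h.2, h'⟩)
    (not_lt.1 fun h' => notMem_Ioo_of_mem_gapsOf hq hp.2.1 ⟨h.1, h'⟩)
  exact hpq (Prod.ext h1 h2)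

lemma gapsOf_countable : (gapsOf K).Countable := by
  refine Set.PairwiseDisjoint.countable_of_isOpen (s := fun p => Ioo p.1 p.2)
    (fun p hp q hq hpq => ?_) (fun _ _ => isOpen_Ioo) fun p hp => nonempty_Ioo.2 hp.2.2.1
  refine disjoint_left.2 fun y hyp hyq => ?_
  rcases gapsOf_pairwise hp hq hpq with h | h
  · exact (hyp.2.trans_le h).not_gt hyq.1
  · exact (hyq.2.trans_le h).not_gt hyp.1

lemma IsClosed.exists_mem_gapsOf (hK : IsClosed K) {x y z : ℝ} (hy : y ∈ K) (hz : z ∈ K)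
    (hyx : y ≤ x) (hxz : x ≤ z) (hx : x ∉ K) : ∃ p ∈ gapsOf K, x ∈ Ioo p.1 p.2 := by
  have hbdd : BddAbove (K ∩ Iic x) := ⟨x, fun _ h => h.2⟩
  have hbdd' : BddBelow (K ∩ Ici x) := ⟨x, fun _ h => h.2⟩
  have hl := (hK.inter isClosed_Iic).csSup_mem ⟨y, hy, hyx⟩ hbdd
  have hr := (hK.inter isClosed_Ici).csInf_mem ⟨z, hz, hxz⟩ hbdd'
  have hlx : sSup (K ∩ Iic x) < x := hl.2.lt_of_ne fun h => hx (h ▸ hl.1)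
  have hxr : x < sInf (K ∩ Ici x) := hr.2.lt_of_ne' fun h => hx (h ▸ hr.1)
  refine ⟨(sSup (K ∩ Iic x), sInf (K ∩ Ici x)),
    ⟨hl.1, hr.1, hlx.trans hxr, disjoint_left.2 fun w hw hwK => ?_⟩, hlx, hxr⟩
  rcases le_total w x with h | h
  · exact (le_csSup hbdd ⟨hwK, h⟩).not_gt hw.1
  · exact (csInf_le hbdd' ⟨hwK, h⟩).not_gt hw.2

lemma FnVBstar.sum_gapsOf_le {φ : ℝ → ℝ} {a b M : ℝ} (hab : a ≤ b) (hK : K ⊆ Icc a b)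
    (h : FnVBstar φ K M) (s : Finset (gapsOf K)) :
    ∑ p ∈ s, (osc φ p.1.1 p.1.2 + (p.1.2 - p.1.1)) ≤ M + (b - a) := by
  obtain ⟨m, c, d, hg, hsum⟩ := exists_goodIntervals_of_finset s (fun p => p.1.1) (fun p => p.1.2)
    (fun p _ => ⟨p.2.1, p.2.2.1, p.2.2.2.1.le⟩)
    fun p _ q _ hpq => gapsOf_pairwise p.2 q.2 (Subtype.coe_injective.ne hpq)
  rw [← hsum fun x y => osc φ x y + (y - x), Finset.sum_add_distrib]
  exact add_le_add (h m c d hg) (hg.sum_sub_le hab hK)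

end Gaps

/-- The weights form a finite measure concentrated on the countable set `range x`, hence singular:
its ratio to Lebesgue measure on small balls tends to `0` at almost every point. -/
lemma ae_forall_le_mul_abs_sub_of_summable {ι : Type*} [Countable ι] (x : ι → ℝ) {w : ι → ℝ}
    (hw : 0 ≤ w) (hs : Summable w) :
    ∀ᵐ t, ∀ ε > 0, ∃ r > 0, ∀ i, |x i - t| < r → w i ≤ ε * |x i - t| := by
  let ρ : Measure ℝ := Measure.sum fun i => ENNReal.ofReal (w i) • Measure.dirac (x i)
  have hmeas : MeasurableSet (range x)ᶜ := (countable_range x).measurableSet.compl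
  have : IsFiniteMeasure ρ := ⟨by
    simp [ρ, Measure.sum_apply _ MeasurableSet.univ, ← ENNReal.ofReal_tsum_of_nonneg hw hs]⟩
  have hsing : ρ ⟂ₘ volume := ⟨(range x)ᶜ, hmeas, by
    simp [ρ, Measure.sum_apply _ hmeas, Measure.dirac_apply' _ hmeas], by
    simpa using (countable_range x).measure_zero volume⟩
  filter_upwards [(Besicovitch.vitaliFamily volume).ae_eventually_measure_zero_of_singular hsing,
    (countable_range x).ae_notMem volume] with t ht htx ε hε
  have hsmall := ((ht.comp (Besicovitch.tendsto_filterAt volume t)).eventually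
    (gt_mem_nhds (ENNReal.ofReal_pos.2 (half_pos hε))))
  obtain ⟨r, hr, hball⟩ := mem_nhdsGT_iff_exists_Ioo_subset.1 hsmall
  refine ⟨r, hr, fun i hi => ?_⟩
  have hpos : 0 < |x i - t| := abs_pos.2 (sub_ne_zero.2 fun h => htx (h ▸ mem_range_self i))
  have hlt : ρ (Metric.closedBall t |x i - t|) < ENNReal.ofReal (ε / 2 * (2 * |x i - t|)) := by
    have := hball ⟨hpos, hi⟩
    simp only [mem_ofPred_eq, Function.comp_apply, Real.volume_closedBall] at this
    rwa [ENNReal.div_lt_iff (.inl (by simpa using hpos)) (.inl ENNReal.ofReal_ne_top),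
      ← ENNReal.ofReal_mul (half_pos hε).le] at this
  have hle : ENNReal.ofReal (w i) ≤ ρ (Metric.closedBall t |x i - t|) :=
    calc ENNReal.ofReal (w i)
        = (ENNReal.ofReal (w i) • Measure.dirac (x i)) (Metric.closedBall t |x i - t|) := by
          simp [Measure.dirac_apply_of_mem, Real.dist_eq]
      _ ≤ ρ (Metric.closedBall t |x i - t|) := Measure.le_sum _ i _
  have := (ENNReal.ofReal_le_ofReal_iff (by positivity)).1 (hle.trans hlt.le)
  linarith

lemma HasDerivWithinAt.hasDerivAt_of_forall_near {φ : ℝ → ℝ} {L t : ℝ} {K : Set ℝ}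
    (hK : HasDerivWithinAt φ L K t)
    (hnear : ∀ ε > 0, ∀ᶠ x in 𝓝 t, x ∉ K →
      ∃ e ∈ K, |e - t| ≤ |x - t| ∧ |φ x - φ e| + |x - e| * |L| ≤ ε * |x - t|) :
    HasDerivAt φ L t := by
  rw [hasDerivAt_iff_isLittleO, Asymptotics.isLittleO_iff]
  intro ε hε
  obtain ⟨r, hr, hin⟩ := Metric.eventually_nhds_iff.1 <| eventually_nhdsWithin_iff.1 <|
    Asymptotics.isLittleO_iff.1 (hasDerivWithinAt_iff_isLittleO.1 hK) (half_pos hε)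
  simp only [Real.norm_eq_abs, smul_eq_mul, Real.dist_eq] at hin ⊢
  filter_upwards [Metric.ball_mem_nhds t hr, hnear (ε / 2) (half_pos hε)] with x hx hxK
  rw [Metric.mem_ball, Real.dist_eq] at hx
  by_cases hxK' : x ∈ K
  · nlinarith [hin hx hxK', abs_nonneg (x - t)]
  obtain ⟨e, heK, het, he⟩ := hxK hxK'
  have hin_e := hin (het.trans_lt hx) heK
  calc |φ x - φ t - (x - t) * L|
      = |(φ x - φ e) + (φ e - φ t - (e - t) * L) - (x - e) * L| := by ring_nf
    _ ≤ |φ x - φ e| + |φ e - φ t - (e - t) * L| + |x - e| * |L| := by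
        rw [← abs_mul]; exact (abs_sub _ _).trans (add_le_add_left (abs_add_le _ _) _)
    _ ≤ ε * |x - t| := by nlinarith

lemma abs_sub_add_le_of_osc_add_le {φ : ℝ → ℝ} {c d x e t L ε : ℝ}
    (hφ : ContinuousOn φ (Icc c d)) (hx : x ∈ Icc c d) (he : e = c ∨ e = d)
    (hw : osc φ c d + (d - c) ≤ ε / (1 + |L|) * |e - t|) :
    |φ x - φ e| + |x - e| * |L| ≤ ε * |e - t| := by
  have hosc : |φ x - φ e| ≤ osc φ c d := by
    rcases he with rfl | rfl
    · exact abs_sub_le_osc hφ le_rfl hx.1 hx.2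
    · rw [abs_sub_comm]; exact abs_sub_le_osc hφ hx.1 hx.2 le_rfl
  have hlen : |x - e| ≤ d - c := by
    rw [abs_le]; rcases he with rfl | rfl <;> constructor <;> linarith [hx.1, hx.2]
  have h0 := osc_nonneg hφ (hx.1.trans hx.2)
  have hL : 0 < 1 + |L| := by positivity
  calc |φ x - φ e| + |x - e| * |L| ≤ (1 + |L|) * (osc φ c d + (d - c)) := by
        nlinarith [mul_le_mul_of_nonneg_right hlen (abs_nonneg L), mul_nonneg h0 (abs_nonneg L),
          abs_nonneg (x - e)]
    _ ≤ (1 + |L|) * (ε / (1 + |L|) * |e - t|) := mul_le_mul_of_nonneg_left hw hL.le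
    _ = ε * |e - t| := by field_simp

lemma IsClosed.eventually_exists_endpoint_near {φ : ℝ → ℝ} {K : Set ℝ} (hK : IsClosed K)
    (hφ : ∀ p ∈ gapsOf K, ContinuousOn φ (Icc p.1 p.2)) {t L ε : ℝ} (hε : 0 ≤ ε) (htK : t ∈ K)
    (hlo : ∃ y ∈ K, y < t) (hhi : ∃ z ∈ K, t < z)
    (hleft : ∃ r > 0, ∀ p : gapsOf K, |p.1.1 - t| < r →
      osc φ p.1.1 p.1.2 + (p.1.2 - p.1.1) ≤ ε / (1 + |L|) * |p.1.1 - t|)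
    (hright : ∃ r > 0, ∀ p : gapsOf K, |p.1.2 - t| < r →
      osc φ p.1.1 p.1.2 + (p.1.2 - p.1.1) ≤ ε / (1 + |L|) * |p.1.2 - t|) :
    ∀ᶠ x in 𝓝 t, x ∉ K →
      ∃ e ∈ K, |e - t| ≤ |x - t| ∧ |φ x - φ e| + |x - e| * |L| ≤ ε * |x - t| := by
  obtain ⟨y, hyK, hyt⟩ := hlo
  obtain ⟨z, hzK, htz⟩ := hhi
  obtain ⟨r₁, hr₁, h₁⟩ := hleft
  obtain ⟨r₂, hr₂, h₂⟩ := hright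
  filter_upwards [Ioo_mem_nhds hyt htz, Metric.ball_mem_nhds t (lt_min hr₁ hr₂)]
    with x hx hxr hxK
  rw [Metric.mem_ball, Real.dist_eq, lt_min_iff] at hxr
  obtain ⟨p, hp, hxp⟩ := hK.exists_mem_gapsOf hyK hzK hx.1.le hx.2.le hxK
  have hxI : x ∈ Icc p.1 p.2 := Ioo_subset_Icc_self hxp
  rcases lt_or_gt_of_ne (fun hxt : x = t => hxK (hxt ▸ htK)) with hxt | hxt
  · have htp : p.2 ≤ t := not_lt.1 fun h => notMem_Ioo_of_mem_gapsOf hp htK ⟨hxp.1.trans hxt, h⟩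
    have het : |p.2 - t| ≤ |x - t| := by
      rw [abs_of_nonpos (by linarith), abs_of_neg (by linarith)]; linarith [hxp.2]
    refine ⟨p.2, hp.2.1, het, ?_⟩
    have := abs_sub_add_le_of_osc_add_le (hφ p hp) hxI (.inr rfl)
      (h₂ ⟨p, hp⟩ (het.trans_lt hxr.2))
    linarith [mul_le_mul_of_nonneg_left het hε]
  · have htp : t ≤ p.1 := not_lt.1 fun h => notMem_Ioo_of_mem_gapsOf hp htK ⟨h, hxt.trans hxp.2⟩
    have het : |p.1 - t| ≤ |x - t| := by
      rw [abs_of_nonneg (by linarith), abs_of_pos (by linarith)]; linarith [hxp.1]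
    refine ⟨p.1, hp.1, het, ?_⟩
    have := abs_sub_add_le_of_osc_add_le (hφ p hp) hxI (.inl rfl)
      (h₁ ⟨p, hp⟩ (het.trans_lt hxr.1))
    linarith [mul_le_mul_of_nonneg_left het hε]

lemma FnVBstar.ae_differentiableAt_of_isClosed {φ : ℝ → ℝ} {a b M : ℝ} {K : Set ℝ}
    (hab : a ≤ b) (hφ : ContinuousOn φ (Icc a b)) (hK : IsClosed K) (hKab : K ⊆ Icc a b)
    (h : FnVBstar φ K M) : ∀ᵐ t, t ∈ K → DifferentiableAt ℝ φ t := by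
  rcases K.eq_empty_or_nonempty with rfl | hKne
  · exact ae_of_all _ fun t ht => absurd ht (notMem_empty t)
  have hφgap : ∀ p ∈ gapsOf K, ContinuousOn φ (Icc p.1 p.2) := fun p hp =>
    hφ.mono (Icc_subset_Icc (hKab hp.1).1 (hKab hp.2.1).2)
  let w : gapsOf K → ℝ := fun p => osc φ p.1.1 p.1.2 + (p.1.2 - p.1.1)
  have hw : 0 ≤ w := fun p =>
    add_nonneg (osc_nonneg (hφgap p p.2) p.2.2.2.1.le) (sub_nonneg.2 p.2.2.2.1.le)
  have hs : Summable w := summable_of_sum_le hw (h.sum_gapsOf_le hab hKab)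
  have : Countable (gapsOf K) := gapsOf_countable.to_subtype
  have hbdd : BddBelow K ∧ BddAbove K := ⟨bddBelow_Icc.mono hKab, bddAbove_Icc.mono hKab⟩
  filter_upwards
    [(h.boundedVariationOn hφ hKab).locallyBoundedVariationOn.ae_differentiableWithinAt_of_mem,
    ae_forall_le_mul_abs_sub_of_summable (fun p : gapsOf K => p.1.1) hw hs,
    ae_forall_le_mul_abs_sub_of_summable (fun p : gapsOf K => p.1.2) hw hs,
    (countable_singleton (sInf K)).ae_notMem volume,
    (countable_singleton (sSup K)).ae_notMem volume] with t hdiff hleft hright hlo hhi htK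
  have hlot : sInf K < t := (csInf_le hbdd.1 htK).lt_of_ne (Ne.symm hlo)
  have hthi : t < sSup K := (le_csSup hbdd.2 htK).lt_of_ne hhi
  refine ((hdiff htK).hasDerivWithinAt.hasDerivAt_of_forall_near fun ε hε =>
    hK.eventually_exists_endpoint_near hφgap hε.le htK ⟨_, hK.csInf_mem hKne hbdd.1, hlot⟩
      ⟨_, hK.csSup_mem hKne hbdd.2, hthi⟩ (hleft _ (by positivity))
      (hright _ (by positivity))).differentiableAt

lemma FnACstar.ae_differentiableAt {φ : ℝ → ℝ} {a b : ℝ} {E : Set ℝ} (hab : a ≤ b)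
    (hφ : ContinuousOn φ (Icc a b)) (hE : E ⊆ Icc a b) (h : FnACstar φ E) :
    ∀ᵐ t, t ∈ E → DifferentiableAt ℝ φ t := by
  obtain ⟨M, hM⟩ := h.exists_fnVBstar hab hφ hE
  filter_upwards [(hM.to_closure hφ hE).ae_differentiableAt_of_isClosed hab hφ isClosed_closure
    (closure_minimal hE isClosed_Icc)] with t ht htE using ht (subset_closure htE)

/-- An ACG* function on `[a,b]` is differentiable almost everywhere on `[a,b]`. -/
theorem stmt5 (φ : ℝ → ℝ) (a b : ℝ) (hab : a ≤ b)
    (h : FnACGstar φ a b) :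
    ∀ᵐ t ∂(MeasureTheory.volume.restrict (Set.Icc a b)),
      DifferentiableAt ℝ φ t := by
  obtain ⟨hφ, S, hS, hAC⟩ := h
  have hSab : ∀ n, S n ⊆ Icc a b := fun n => hS ▸ subset_iUnion S n
  rw [ae_restrict_iff' measurableSet_Icc, ← hS]
  filter_upwards [ae_all_iff.2 fun n => (hAC n).ae_differentiableAt hab hφ (hSab n)] with t ht htS
  obtain ⟨n, hn⟩ := mem_iUnion.1 htS
  exact ht n hn
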